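/- arXiv:2306.11805 — 2 statements merged into one kernel-verified Lean document; each statement's English description precedes it below -/
import Mathlib

section
/- For m ≥ 1, all zeros of the polynomial L_m(x) = Σ_{k=1}^{m} (1/k!) · C(m-1, m-k) · x^k other than the simple zero at x = 0 are real, distinct and negative. -/
open Polynomial in
/-- The polynomial `L_m(x) = Σ_{k=1}^{m} (1/k!) · C(m-1, m-k) · x^k`. -/
noncomputable def lagP (m : ℕ) : Polynomial ℝ :=
  ∑ k ∈ Finset.Icc 1 m, Polynomial.C ((1 / (Nat.factorial k) : ℝ) * (Nat.choose (m - 1) (m - k))) * Polynomial.X ^ k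

/-!
With `D` the derivative, `L_{n+1} = (1 + D)^n X^{n+1} / (n+1)!`. The operator `1 + D` preserves
real-rootedness: `q + q' = e^{-x} (e^x q)'`, so Rolle's theorem for `e^x q` gives a root of
`q + q'` strictly between any two roots of `q`, and one to the left of the smallest root since
`e^x q → 0` at `-∞`. Inductively `(1 + D)^j X^{a+j} = X^a ∏ (X - x)` over `j` distinct negative
`x`: the `j + 1` distinct roots `0, x₁, …, x_j` of `X^{a+1} ∏ (X - x_i)` produce `j + 1` distinct
negative roots of its image, and these together with the root `0` of multiplicity `a` exhaust
its degree.
-/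

open Polynomial Filter Set Topology

theorem exists_hasDerivAt_eq_zero_of_tendsto_atBot {f f' : ℝ → ℝ} {b l : ℝ}
    (hfa : Tendsto f atBot (𝓝 l)) (hfb : Tendsto f (𝓝[<] b) (𝓝 l))
    (hff' : ∀ x < b, HasDerivAt f (f' x) x) : ∃ c < b, f' c = 0 := by
  -- `φ` maps `(0, 1)` increasingly onto `(-∞, b)`, reducing to Rolle on a bounded interval.
  set φ : ℝ → ℝ := fun t => b + 1 - t⁻¹
  have hφ_lt : ∀ t ∈ Ioo (0 : ℝ) 1, φ t < b := fun t ht => by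
    have : 1 < t⁻¹ := (one_lt_inv₀ ht.1).mpr ht.2
    simp only [φ]; linarith
  have hφ_zero : Tendsto φ (𝓝[>] 0) atBot :=
    tendsto_atBot_add_const_left _ _ (tendsto_neg_atTop_atBot.comp tendsto_inv_nhdsGT_zero)
  have hφ_one : Tendsto φ (𝓝[<] 1) (𝓝[<] b) := by
    refine tendsto_nhdsWithin_of_tendsto_nhds_of_eventually_within _ ?_ ?_
    · have : ContinuousAt φ 1 := continuousAt_const.sub (continuousAt_inv₀ one_ne_zero)
      simpa [φ] using this.tendsto.mono_left nhdsWithin_le_nhds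
    · filter_upwards [Ioo_mem_nhdsLT (zero_lt_one' ℝ)] with t ht using hφ_lt t ht
  have hderiv : ∀ t ∈ Ioo (0 : ℝ) 1, HasDerivAt (f ∘ φ) (f' (φ t) * (t ^ 2)⁻¹) t := by
    intro t ht
    have := (hasDerivAt_inv ht.1.ne').const_sub (b + 1)
    simpa using (hff' _ (hφ_lt t ht)).comp t this
  obtain ⟨c, hc, hc0⟩ := exists_hasDerivAt_eq_zero' zero_lt_one (hfa.comp hφ_zero)
    (hfb.comp hφ_one) hderiv
  exact ⟨φ c, hφ_lt c hc, (mul_eq_zero.mp hc0).resolve_right (by have := hc.1; positivity)⟩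

theorem hasDerivAt_exp_mul_eval (q : ℝ[X]) (x : ℝ) :
    HasDerivAt (fun x => Real.exp x * q.eval x) (Real.exp x * (q + derivative q).eval x) x := by
  rw [eval_add, mul_add]
  exact (Real.hasDerivAt_exp x).mul (q.hasDerivAt x)

theorem tendsto_exp_mul_eval_atBot (q : ℝ[X]) :
    Tendsto (fun x => Real.exp x * q.eval x) atBot (𝓝 0) := by
  refine ((q.comp (-X)).tendsto_div_exp_atTop.comp tendsto_neg_atBot_atTop).congr fun x => ?_
  simp [Real.exp_neg, div_eq_mul_inv, mul_comm]

theorem exists_isRoot_add_derivative_mem_Ioo (q : ℝ[X]) {a b : ℝ} (hab : a < b)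
    (ha : q.IsRoot a) (hb : q.IsRoot b) : ∃ c ∈ Ioo a b, (q + derivative q).IsRoot c := by
  obtain ⟨c, hc, hc0⟩ := exists_hasDerivAt_eq_zero hab
    (by fun_prop : Continuous fun x => Real.exp x * q.eval x).continuousOn
    (by simp [ha.eq_zero, hb.eq_zero]) fun x _ => hasDerivAt_exp_mul_eval q x
  exact ⟨c, hc, (mul_eq_zero.mp hc0).resolve_left (Real.exp_ne_zero c)⟩

theorem exists_isRoot_add_derivative_lt (q : ℝ[X]) {b : ℝ} (hb : q.IsRoot b) :
    ∃ c < b, (q + derivative q).IsRoot c := by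
  have hcont : Continuous fun x => Real.exp x * q.eval x := by fun_prop
  obtain ⟨c, hc, hc0⟩ :=
    exists_hasDerivAt_eq_zero_of_tendsto_atBot (tendsto_exp_mul_eval_atBot q)
    (by simpa [hb.eq_zero] using (hcont.tendsto b).mono_left nhdsWithin_le_nhds)
    fun x _ => hasDerivAt_exp_mul_eval q x
  exact ⟨c, hc, (mul_eq_zero.mp hc0).resolve_left (Real.exp_ne_zero c)⟩

theorem exists_finset_isRoot_add_derivative (q : ℝ[X]) (s : Finset ℝ)
    (hs : ∀ x ∈ s, q.IsRoot x) : ∃ t : Finset ℝ, t.card = s.card ∧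
      ∀ x ∈ t, (q + derivative q).IsRoot x ∧ ∃ y ∈ s, x < y := by
  classical
  induction s using Finset.induction_on_max with
  | empty => exact ⟨∅, rfl, by simp⟩
  | insert a s hlt ih =>
    obtain ⟨t, ht_card, ht⟩ := ih fun x hx => hs x (Finset.mem_insert_of_mem hx)
    have ha_root : q.IsRoot a := hs a (Finset.mem_insert_self a s)
    have ha : a ∉ s := fun h => lt_irrefl a (hlt a h)
    rcases s.eq_empty_or_nonempty with rfl | hne
    · obtain ⟨c, hca, hc⟩ := exists_isRoot_add_derivative_lt q ha_root
      refine ⟨{c}, Finset.card_singleton c, ?_⟩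
      simpa only [Finset.mem_singleton, forall_eq, Finset.insert_empty, exists_eq_left]
        using ⟨hc, hca⟩
    · obtain ⟨c, ⟨hbc, hca⟩, hc⟩ :=
        exists_isRoot_add_derivative_mem_Ioo q (hlt _ (s.max'_mem hne))
        (hs _ (Finset.mem_insert_of_mem (s.max'_mem hne))) ha_root
      have hlt_c : ∀ x ∈ t, x < c := fun x hx => by
        obtain ⟨y, hy, hxy⟩ := (ht x hx).2
        exact hxy.trans ((s.le_max' y hy).trans_lt hbc)
      refine ⟨insert c t, ?_, ?_⟩
      · rw [Finset.card_insert_of_notMem fun h => lt_irrefl c (hlt_c c h),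
          Finset.card_insert_of_notMem ha, ht_card]
      · simp only [Finset.forall_mem_insert, Finset.exists_mem_insert]
        exact ⟨⟨hc, Or.inl hca⟩, fun x hx => ⟨(ht x hx).1, Or.inr (ht x hx).2⟩⟩

theorem exists_add_derivative_X_pow_mul_prod (a : ℕ) (s : Finset ℝ) (hs : ∀ x ∈ s, x < 0) :
    ∃ t : Finset ℝ, t.card = s.card + 1 ∧ (∀ x ∈ t, x < 0) ∧
      X ^ (a + 1) * ∏ x ∈ s, (X - C x) + derivative (X ^ (a + 1) * ∏ x ∈ s, (X - C x))
        = X ^ a * ∏ x ∈ t, (X - C x) := by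
  classical
  set P : ℝ[X] := ∏ x ∈ s, (X - C x)
  set q : ℝ[X] := X ^ (a + 1) * P
  have hprod_monic (u : Finset ℝ) : (∏ x ∈ u, (X - C x)).Monic := monic_prod_X_sub_C id u
  have hq : q.Monic := (monic_X_pow _).mul (hprod_monic s)
  have hq' : (q + derivative q).Monic := hq.add_of_left (degree_derivative_lt hq.ne_zero)
  have hq_roots : ∀ x ∈ insert 0 s, q.IsRoot x := by
    simp only [Finset.forall_mem_insert, q, P, IsRoot.def, eval_mul, eval_pow, eval_X, eval_prod,
      eval_sub, eval_C]
    exact ⟨by simp, fun x hx => mul_eq_zero_of_right _ (Finset.prod_eq_zero hx (sub_self x))⟩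
  obtain ⟨t, ht_card, ht⟩ := exists_finset_isRoot_add_derivative q (insert 0 s) hq_roots
  rw [Finset.card_insert_of_notMem fun h => lt_irrefl _ (hs 0 h)] at ht_card
  have ht_neg : ∀ x ∈ t, x < 0 := fun x hx => by
    obtain ⟨y, hy, hxy⟩ := (ht x hx).2
    rcases Finset.mem_insert.mp hy with rfl | hy
    · exact hxy
    · exact hxy.trans (hs y hy)
  have hX_dvd : X ^ a ∣ q + derivative q :=
    ⟨X * (P + derivative P) + C (a + 1 : ℝ) * P, by
      simp only [q, derivative_mul, derivative_X_pow]; push_cast; ring⟩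
  have hprod_dvd : ∏ x ∈ t, (X - C x) ∣ q + derivative q := by
    rw [Finset.prod_eq_multiset_prod, Multiset.prod_X_sub_C_dvd_iff_le_roots hq'.ne_zero,
      Multiset.le_iff_subset t.nodup]
    exact fun x hx => (mem_roots hq'.ne_zero).mpr (ht x hx).1
  have hcop : IsCoprime (X ^ a) (∏ x ∈ t, (X - C x)) := by
    refine IsCoprime.pow_left (IsCoprime.prod_right fun x hx => ?_)
    have := isCoprime_X_sub_C_of_isUnit_sub
      (zero_sub x ▸ (neg_ne_zero.mpr (ht_neg x hx).ne).isUnit)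
    rwa [C_0, sub_zero] at this
  have hmonic : (X ^ a * ∏ x ∈ t, (X - C x)).Monic := (monic_X_pow a).mul (hprod_monic t)
  refine ⟨t, ht_card, ht_neg,
    eq_of_monic_of_dvd_of_natDegree_le hmonic hq' (hcop.mul_dvd hX_dvd hprod_dvd) ?_⟩
  rw [natDegree_add_eq_left_of_degree_lt (degree_derivative_lt hq.ne_zero),
    (monic_X_pow a).natDegree_mul (hprod_monic t), (monic_X_pow _).natDegree_mul (hprod_monic s)]
  simp only [natDegree_X_pow, natDegree_finsetProd_X_sub_C_eq_card, ht_card]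
  omega

theorem exists_one_add_derivative_pow_X_pow_eq (j a : ℕ) :
    ∃ s : Finset ℝ, s.card = j ∧ (∀ x ∈ s, x < 0) ∧
      ((1 + derivative : Module.End ℝ ℝ[X]) ^ j) (X ^ (a + j))
        = X ^ a * ∏ x ∈ s, (X - C x) := by
  induction j generalizing a with
  | zero => exact ⟨∅, rfl, by simp, by simp⟩
  | succ j ih =>
    obtain ⟨s, hs_card, hs_neg, hs⟩ := ih (a + 1)
    obtain ⟨t, ht_card, ht_neg, ht⟩ := exists_add_derivative_X_pow_mul_prod a s hs_neg
    refine ⟨t, by rw [ht_card, hs_card], ht_neg, ?_⟩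
    rw [pow_succ', Module.End.mul_apply, show a + (j + 1) = a + 1 + j by omega, hs,
      LinearMap.add_apply, Module.End.one_apply, ht]

theorem one_add_derivative_pow_X_pow {R : Type*} [CommSemiring R] (j m : ℕ) :
    ((1 + derivative : Module.End R R[X]) ^ j) (X ^ m)
      = ∑ i ∈ Finset.range (j + 1),
          C ((j.choose i : R) * m.descFactorial (j - i)) * X ^ (m - (j - i)) := by
  rw [(Commute.one_left _).add_pow, LinearMap.sum_apply]
  refine Finset.sum_congr rfl fun i _ => ?_
  rw [one_pow, one_mul, Module.End.mul_apply, Module.End.natCast_apply, map_nsmul,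
    Module.End.pow_apply, iterate_derivative_X_pow_eq_C_mul]
  simp only [nsmul_eq_mul, C_mul, map_natCast]
  ring

theorem lagP_succ_eq (n : ℕ) :
    lagP (n + 1)
      = C ((n + 1).factorial⁻¹ : ℝ) * ((1 + derivative : Module.End ℝ ℝ[X]) ^ n) (X ^ (n + 1)) := by
  rw [lagP, one_add_derivative_pow_X_pow, Finset.mul_sum, ← Finset.Ico_add_one_right_eq_Icc,
    Finset.sum_Ico_eq_sum_range, add_tsub_cancel_right]
  refine Finset.sum_congr rfl fun i hi => ?_
  have hi : i ≤ n := Nat.lt_succ_iff.mp (Finset.mem_range.mp hi)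
  have hfact := Nat.factorial_mul_descFactorial (show n - i ≤ n + 1 by omega)
  rw [show n + 1 - (n - i) = i + 1 by omega] at hfact
  rw [← mul_assoc, ← C_mul, show n + 1 - (n - i) = 1 + i by omega, Nat.add_sub_cancel,
    show n + 1 - (1 + i) = n - i by omega, Nat.choose_symm hi, add_comm 1 i, ← hfact]
  have hdesc : ((n + 1).descFactorial (n - i) : ℝ) ≠ 0 :=
    Nat.cast_ne_zero.mpr (right_ne_zero_of_mul (hfact ▸ Nat.factorial_ne_zero _))
  push_cast
  field_simp

theorem roots_map_C_mul_X_mul_prod {K L : Type*} [Field K] [Field L] (f : K →+* L) {c : K}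
    (hc : c ≠ 0) (s : Finset K) :
    ((C c * (X * ∏ x ∈ s, (X - C x))).map f).roots = 0 ::ₘ s.val.map f := by
  have hprod : (∏ x ∈ s, (X - C x)).map f = ((s.val.map f).map fun a => X - C a).prod := by
    rw [Polynomial.map_prod, Finset.prod_eq_multiset_prod, Multiset.map_map]
    simp
  rw [Polynomial.map_mul, Polynomial.map_mul, map_C, map_X, hprod, roots_C_mul _ (by simpa),
    roots_mul (mul_ne_zero X_ne_zero (monic_multisetProd_X_sub_C _).ne_zero),
    roots_X, roots_multiset_prod_X_sub_C, Multiset.singleton_add]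

/-- For m ≥ 1, all zeros of `L_m` other than the simple zero at `x = 0` are real, distinct
and negative: the complex roots of `L_m` (with multiplicity) are `0` together with `m - 1`
distinct negative reals. -/
theorem stmt_9 (m : ℕ) (hm : 1 ≤ m) :
    ∃ s : Finset ℝ, s.card = m - 1 ∧ (∀ x ∈ s, x < 0) ∧
      ((lagP m).map (algebraMap ℝ ℂ)).roots
        = 0 ::ₘ (s.val.map (fun x : ℝ => (x : ℂ))) := by
  obtain ⟨n, rfl⟩ : ∃ n, m = n + 1 := ⟨m - 1, by omega⟩
  obtain ⟨s, hs_card, hs_neg, hs⟩ := exists_one_add_derivative_pow_X_pow_eq n 1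
  refine ⟨s, hs_card, hs_neg, ?_⟩
  rw [lagP_succ_eq, add_comm, hs, pow_one,
    roots_map_C_mul_X_mul_prod _ (inv_ne_zero (Nat.cast_ne_zero.mpr (Nat.factorial_ne_zero _)))]
  rfl
end

section
/- The polynomials L_m^{(τ)}(ξ) = (-ξ)^{m-τ} Σ_{n=0}^{τ-1} C(m+n, n) · C(m-1, τ-n-1) · (-ξ²)^n satisfy the three-term recurrence L_{m+1}^{(τ)}(ξ) = a_m^{(τ)}(ξ) L_m^{(τ)}(ξ) + b_m L_{m-1}^{(τ)}(ξ) for m ≥ 1, where a_m^{(τ)}(ξ) = -((m+τ)/(m+1)) ξ - ((m-τ)/(m+1)) ξ^{-1} and b_m = -(m-1)/(m+1). -/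
/-!
Write `L_m(ξ) = (-ξ)^(m-τ) S_m(-ξ²)` with `S_m(x) = Σ_{n<τ} C(m+n,n) C(m-1,τ-n-1) xⁿ`. Once the
powers of `-ξ` are cleared, the recurrence is the polynomial identity
`(m+1) x S_{m+1} = ((m+τ) x - (m-τ)) S_m + (m-1) S_{m-1}`, checked coefficientwise. The top
coefficient on the left and the constant coefficient on the right vanish by the absorption identity;
every other coefficient involves six binomials, each a rational multiple of `C(m+n,n)` or of
`C(m-1,k)`, so after clearing denominators it becomes a polynomial identity in `m, n, k`.
-/

/-- `L_m^{(τ)}(ξ) = (-ξ)^{m-τ} Σ_{n=0}^{τ-1} C(m+n, n) · C(m-1, τ-n-1) · (-ξ²)^n`,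
with the exponent `m - τ` taken in `ℤ`. -/
noncomputable def lagD (τ m : ℕ) (ξ : ℝ) : ℝ :=
  (-ξ) ^ ((m : ℤ) - (τ : ℤ)) *
    ∑ n ∈ Finset.range τ,
      ((Nat.choose (m + n) n : ℝ)) * (Nat.choose (m - 1) (τ - n - 1)) * (-ξ ^ 2) ^ n

open Finset

section CastChoose

variable {R : Type*} [Ring R]

theorem Nat.cast_sub_mul_choose (n k : ℕ) :
    ((n - k : ℕ) : R) * n.choose k = ((n : R) - k) * n.choose k := by
  rcases le_or_gt k n with h | h
  · rw [Nat.cast_sub h]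
  · simp [Nat.choose_eq_zero_of_lt h]

theorem Nat.cast_succ_mul_choose_succ (n k : ℕ) :
    ((k : R) + 1) * n.choose (k + 1) = ((n : R) - k) * n.choose k := by
  rw [← Nat.cast_sub_mul_choose]
  exact_mod_cast congrArg (Nat.cast (R := R))
    ((Nat.mul_comm _ _).trans ((Nat.choose_succ_right_eq n k).trans (Nat.mul_comm _ _)))

theorem Nat.cast_mul_choose_pred (n k : ℕ) :
    (n : R) * (n - 1).choose k = ((n : R) - k) * n.choose k := by
  rcases n with _ | n
  · rcases k with _ | k <;> simp
  · rw [← Nat.cast_sub_mul_choose, Nat.add_sub_cancel]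
    exact_mod_cast congrArg (Nat.cast (R := R))
      ((Nat.mul_comm _ _).trans ((Nat.choose_mul_succ_eq n k).trans (Nat.mul_comm _ _)))

end CastChoose

theorem Nat.add_one_mul_add_add_one_choose (a n : ℕ) :
    (a + 1) * (a + n + 1).choose n = (a + n + 1) * (a + n).choose n := by
  have h := Nat.choose_mul_succ_eq (a + n) n
  rw [show a + n + 1 - n = a + 1 by omega] at h
  rw [Nat.mul_comm, ← h, Nat.mul_comm]

theorem Finset.sum_range_succ_mul_pow_succ_eq {R : Type*} [CommSemiring R] {g h : ℕ → R} {t : ℕ}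
    (x : R) (hg : g t = 0) (hh : h 0 = 0) (hgh : ∀ n < t, g n = h (n + 1)) :
    ∑ n ∈ range (t + 1), g n * x ^ (n + 1) = ∑ n ∈ range (t + 1), h n * x ^ n := by
  rw [sum_range_succ, sum_range_succ', hg, hh, zero_mul, zero_mul, add_zero, add_zero]
  exact sum_congr rfl fun n hn ↦ by rw [hgh n (mem_range.mp hn)]

noncomputable def lagCoeff (τ m n : ℕ) : ℝ := (m + n).choose n * (m - 1).choose (τ - n - 1)

noncomputable def lagSum (τ m : ℕ) (x : ℝ) : ℝ := ∑ n ∈ range τ, lagCoeff τ m n * x ^ n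

theorem lagD_eq_zpow_mul_lagSum (τ m : ℕ) (ξ : ℝ) :
    lagD τ m ξ = (-ξ) ^ ((m : ℤ) - τ) * lagSum τ m (-ξ ^ 2) :=
  rfl

theorem lagCoeff_top (p t : ℕ) :
    ((p : ℝ) + 2) * lagCoeff (t + 1) (p + 2) t
      = ((p : ℝ) + t + 2) * lagCoeff (t + 1) (p + 1) t := by
  have h := congrArg (Nat.cast (R := ℝ)) (Nat.add_one_mul_add_add_one_choose (p + 1) t)
  push_cast at h
  simp only [lagCoeff, Nat.add_sub_cancel_left, Nat.sub_self, Nat.choose_zero_right, Nat.cast_one,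
    mul_one, show p + 2 + t = p + 1 + t + 1 by ring]
  linear_combination h

theorem lagCoeff_bottom (p t : ℕ) :
    ((p : ℝ) - t) * lagCoeff (t + 1) (p + 1) 0 = p * lagCoeff (t + 1) p 0 := by
  simp only [lagCoeff, Nat.choose_zero_right, Nat.cast_one, one_mul, Nat.add_sub_cancel,
    Nat.sub_zero]
  exact (Nat.cast_mul_choose_pred p t).symm

theorem lagCoeff_shift {p t n : ℕ} (hn : n < t) :
    ((p : ℝ) + 2) * lagCoeff (t + 1) (p + 2) n - ((p : ℝ) + t + 2) * lagCoeff (t + 1) (p + 1) n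
      = ((t : ℝ) - p) * lagCoeff (t + 1) (p + 1) (n + 1) + p * lagCoeff (t + 1) p (n + 1) := by
  obtain ⟨k, rfl⟩ : ∃ k, t = n + k + 1 := ⟨t - n - 1, by omega⟩
  simp only [lagCoeff, show n + k + 1 + 1 - n - 1 = k + 1 by omega,
    show n + k + 1 + 1 - (n + 1) - 1 = k by omega, show p + 2 - 1 = p + 1 by omega,
    Nat.add_sub_cancel, show p + 2 + n = p + 1 + n + 1 by ring,
    show p + 1 + (n + 1) = p + 1 + n + 1 by ring, show p + (n + 1) = p + 1 + n by ring]
  have e1 := congrArg (Nat.cast (R := ℝ)) (Nat.add_one_mul_add_add_one_choose (p + 1) n)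
  have e2 := congrArg (Nat.cast (R := ℝ)) (Nat.add_one_mul_choose_eq (p + 1 + n) n)
  have e3 := Nat.cast_succ_mul_choose_succ (R := ℝ) (p + 1 + n) n
  have e4 := congrArg (Nat.cast (R := ℝ)) (Nat.add_one_mul_choose_eq p k)
  have e5 := Nat.cast_succ_mul_choose_succ (R := ℝ) p k
  have e6 := Nat.cast_mul_choose_pred (R := ℝ) p k
  push_cast at e1 e2 e3 e4 ⊢
  have hnk : ((n : ℝ) + 1) * ((k : ℝ) + 1) ≠ 0 := by positivity
  refine mul_left_cancel₀ hnk ?_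
  linear_combination ((n : ℝ) + 1) * ((k : ℝ) + 1) * ((p + 1).choose (k + 1) : ℝ) * e1
    - ((n : ℝ) + 1) * ((p : ℝ) + n + 2) * ((p + 1 + n).choose n : ℝ) * e4
    - ((n : ℝ) + 1) * ((p : ℝ) + n + k + 3) * ((p + 1 + n).choose n : ℝ) * e5
    + ((k : ℝ) + 1) * ((n : ℝ) + k + 1 - p) * (p.choose k : ℝ) * e2
    - ((k : ℝ) + 1) * (p : ℝ) * ((p - 1).choose k : ℝ) * e3
    - ((k : ℝ) + 1) * ((p : ℝ) + 1) * ((p + 1 + n).choose n : ℝ) * e6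

theorem lagSum_recurrence (τ p : ℕ) (x : ℝ) :
    ((p : ℝ) + 2) * x * lagSum τ (p + 2) x
      = (((p : ℝ) + τ + 1) * x - ((p : ℝ) + 1 - τ)) * lagSum τ (p + 1) x + p * lagSum τ p x := by
  rcases τ with _ | t
  · simp [lagSum]
  have key := sum_range_succ_mul_pow_succ_eq x
    (g := fun n ↦ ((p : ℝ) + 2) * lagCoeff (t + 1) (p + 2) n
      - ((p : ℝ) + t + 2) * lagCoeff (t + 1) (p + 1) n)
    (h := fun n ↦ ((t : ℝ) - p) * lagCoeff (t + 1) (p + 1) n + p * lagCoeff (t + 1) p n)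
    (sub_eq_zero.mpr (lagCoeff_top p t)) (by linear_combination -lagCoeff_bottom p t)
    (fun n hn ↦ lagCoeff_shift hn)
  have hg : ∑ n ∈ range (t + 1), (((p : ℝ) + 2) * lagCoeff (t + 1) (p + 2) n
        - ((p : ℝ) + t + 2) * lagCoeff (t + 1) (p + 1) n) * x ^ (n + 1)
      = ((p : ℝ) + 2) * x * lagSum (t + 1) (p + 2) x
        - ((p : ℝ) + t + 2) * x * lagSum (t + 1) (p + 1) x := by
    simp only [lagSum, mul_sum, ← sum_sub_distrib]
    exact sum_congr rfl fun n _ ↦ by ring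
  have hh : ∑ n ∈ range (t + 1), (((t : ℝ) - p) * lagCoeff (t + 1) (p + 1) n
        + p * lagCoeff (t + 1) p n) * x ^ n
      = ((t : ℝ) - p) * lagSum (t + 1) (p + 1) x + p * lagSum (t + 1) p x := by
    simp only [lagSum, mul_sum, ← sum_add_distrib]
    exact sum_congr rfl fun n _ ↦ by ring
  push_cast
  linear_combination hh - hg + key

theorem stmt_11_general (τ : ℕ) (m : ℕ) (hm : 1 ≤ m) (ξ : ℝ) (hξ : ξ ≠ 0) :
    lagD τ (m + 1) ξ
      = (-(((m : ℝ) + τ) / ((m : ℝ) + 1)) * ξ + -(((m : ℝ) - τ) / ((m : ℝ) + 1)) * ξ⁻¹)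
          * lagD τ m ξ
        + (-(((m : ℝ) - 1) / ((m : ℝ) + 1))) * lagD τ (m - 1) ξ := by
  obtain ⟨p, rfl⟩ : ∃ p, m = p + 1 := ⟨m - 1, by omega⟩
  have hrec := lagSum_recurrence τ p (-ξ ^ 2)
  have hpow (j : ℕ) : (-ξ) ^ (((p + j : ℕ) : ℤ) - τ) = (-ξ) ^ ((p : ℤ) - τ) * (-ξ) ^ j := by
    rw [← zpow_natCast, ← zpow_add₀ (neg_ne_zero.mpr hξ)]
    push_cast
    ring_nf
  simp only [lagD_eq_zpow_mul_lagSum, Nat.add_sub_cancel, show p + 1 + 1 = p + 2 by ring, hpow 2,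
    hpow 1]
  push_cast
  field_simp
  linear_combination -(-ξ) ^ ((p : ℤ) - τ) * hrec

theorem stmt_11 (τ : ℕ) (hτ : 1 ≤ τ) (m : ℕ) (hm : 1 ≤ m) (ξ : ℝ) (hξ : ξ ≠ 0) :
    lagD τ (m + 1) ξ
      = (-(((m : ℝ) + τ) / ((m : ℝ) + 1)) * ξ + -(((m : ℝ) - τ) / ((m : ℝ) + 1)) * ξ⁻¹)
          * lagD τ m ξ
        + (-(((m : ℝ) - 1) / ((m : ℝ) + 1))) * lagD τ (m - 1) ξ :=
  stmt_11_general τ m hm ξ hξ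
end
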